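/- Let K be a pre-H-field which has 1-DIVP and which has no gap. Then I(K) = ∂𝔬: the set I(K) = {y ∈ K : y ≼ f′ for some f ∈ O} equals the set {g′ : g ∈ 𝔬}. -/

import Mathlib

/-- `DIVPat D r` : the ordered differential field `K` with derivation `D` has `r`-DIVP:
for every polynomial `P ∈ K[Y₀,…,Y_r]` and all `f < g` with
`P(f, f′, …, f⁽ʳ⁾) < 0 < P(g, g′, …, g⁽ʳ⁾)` there is `y` with `f < y < g` and
`P(y, y′, …, y⁽ʳ⁾) = 0`. -/
def DIVPat {K : Type*} [Field K] [LinearOrder K] [IsStrictOrderedRing K] (D : K → K) (r : ℕ) : Prop :=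
  ∀ (P : MvPolynomial (Fin (r + 1)) K) (f g : K), f < g →
    MvPolynomial.eval (fun i : Fin (r + 1) => D^[(i : ℕ)] f) P < 0 →
    0 < MvPolynomial.eval (fun i : Fin (r + 1) => D^[(i : ℕ)] g) P →
    ∃ y : K, f < y ∧ y < g ∧ MvPolynomial.eval (fun i : Fin (r + 1) => D^[(i : ℕ)] y) P = 0

/-- The maximal ideal `𝔬 = {f ∈ O : f = 0 ∨ f⁻¹ ∉ O}` of the valuation ring `O`. -/
def mIdeal {K : Type*} [Field K] (O : Subring K) : Set K :=
  {f | f ∈ O ∧ (f = 0 ∨ f⁻¹ ∉ O)}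

/-- `f ≼ g` : `f ∈ O·g`. -/
def preceq {K : Type*} [Field K] (O : Subring K) (f g : K) : Prop :=
  ∃ h ∈ O, f = h * g

/-- `f ≺ g` : `g ≠ 0` and `f/g ∈ 𝔬`. -/
def precl {K : Type*} [Field K] (O : Subring K) (f g : K) : Prop :=
  g ≠ 0 ∧ f / g ∈ mIdeal O

/-- `f ≍ g` : `f ≼ g` and `g ≼ f`. -/
def asymp {K : Type*} [Field K] (O : Subring K) (f g : K) : Prop :=
  preceq O f g ∧ preceq O g f

/-- `K` (an ordered field), equipped with the derivation `D` and the valuation ring `O`,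
is a pre-`H`-field. -/
structure IsPreHField {K : Type*} [Field K] [LinearOrder K] [IsStrictOrderedRing K] (D : K → K) (O : Subring K) : Prop where
  map_add : ∀ a b : K, D (a + b) = D a + D b
  leibniz : ∀ a b : K, D (a * b) = a * D b + b * D a
  mem_or_inv_mem : ∀ f : K, f ≠ 0 → f ∈ O ∨ f⁻¹ ∈ O
  convex : ∀ a b : K, 0 ≤ a → a ≤ b → b ∈ O → a ∈ O
  deriv_pos : ∀ f : K, (∀ g ∈ O, g < f) → 0 < D f
  small : ∀ f g : K, f ≠ 0 → g ≠ 0 → preceq O f 1 → precl O g 1 →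
    precl O (D f) (D g / g)

/-- `s` is a gap in the pre-`H`-field `K`. -/
def IsGap {K : Type*} [Field K] [LinearOrder K] [IsStrictOrderedRing K] (D : K → K) (O : Subring K) (s : K) : Prop :=
  s ≠ 0 ∧ (∀ g : K, g ≠ 0 → ¬ asymp O g 1 → precl O s (D g / g)) ∧
    (∀ h : K, h ≠ 0 → precl O h 1 → precl O (D h) s)

section helpers
variable {K : Type*} [Field K] [LinearOrder K] [IsStrictOrderedRing K] {O : Subring K}

lemma mIdeal_neg {x : K} (hx : x ∈ mIdeal O) : -x ∈ mIdeal O := by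
  obtain ⟨h1, h2⟩ := hx
  refine ⟨O.neg_mem h1, ?_⟩
  rcases h2 with h | h
  · left; simp [h]
  · right; intro hc
    exact h (by simpa [inv_neg] using O.neg_mem hc)

lemma mIdeal_mul {a x : K} (ha : a ∈ O) (hx : x ∈ mIdeal O) : a * x ∈ mIdeal O := by
  obtain ⟨h1, h2⟩ := hx
  refine ⟨O.mul_mem ha h1, ?_⟩
  rcases h2 with h | h
  · left; simp [h]
  · by_cases ha0 : a = 0
    · left; simp [ha0]
    · right; intro hc
      apply h
      have hx0 : x ≠ 0 := by rintro rfl; simp at h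
      have : x⁻¹ = a * (a * x)⁻¹ := by field_simp
      rw [this]; exact O.mul_mem ha hc

lemma mIdeal_lt_one (hconv : ∀ a b : K, 0 ≤ a → a ≤ b → b ∈ O → a ∈ O)
    {x : K} (hx : x ∈ mIdeal O) : x < 1 := by
  by_contra hc
  push_neg at hc
  have hx0 : x ≠ 0 := by rintro rfl; exact absurd hc (by norm_num)
  have hxpos : (0:K) < x := lt_of_lt_of_le one_pos hc
  have : x⁻¹ ∈ O := hconv x⁻¹ 1 (by positivity) (inv_le_one_of_one_le₀ hc) O.one_mem
  rcases hx.2 with h | h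
  · exact hx0 h
  · exact h this

lemma mIdeal_abs_lt_one (hconv : ∀ a b : K, 0 ≤ a → a ≤ b → b ∈ O → a ∈ O)
    {x : K} (hx : x ∈ mIdeal O) : |x| < 1 := by
  rw [abs_lt]
  refine ⟨?_, mIdeal_lt_one hconv hx⟩
  have := mIdeal_lt_one hconv (mIdeal_neg hx)
  linarith

lemma mIdeal_convex (hconv : ∀ a b : K, 0 ≤ a → a ≤ b → b ∈ O → a ∈ O)
    {x g : K} (h0 : 0 ≤ x) (hxg : x ≤ g) (hg : g ∈ mIdeal O) : x ∈ mIdeal O := by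
  refine ⟨hconv x g h0 hxg hg.1, ?_⟩
  by_cases hx0 : x = 0
  · left; exact hx0
  · right; intro hc
    have hxpos : (0:K) < x := lt_of_le_of_ne h0 (Ne.symm hx0)
    have hg0 : g ≠ 0 := ne_of_gt (lt_of_lt_of_le hxpos hxg)
    rcases hg.2 with h | h
    · exact hg0 h
    · apply h
      exact hconv g⁻¹ x⁻¹ (by have : (0:K) < g := lt_of_lt_of_le hxpos hxg; positivity)
        (inv_anti₀ hxpos hxg) hc

lemma mIdeal_of_abs_le (hconv : ∀ a b : K, 0 ≤ a → a ≤ b → b ∈ O → a ∈ O)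
    {w g : K} (h : |w| ≤ g) (hg : g ∈ mIdeal O) : w ∈ mIdeal O := by
  have h' := mIdeal_convex hconv (abs_nonneg w) h hg
  rcases abs_cases w with ⟨he, _⟩ | ⟨he, _⟩
  · rwa [he] at h'
  · rw [he] at h'
    simpa using mIdeal_neg h'

end helpers

theorem stmt6 {K : Type*} [Field K] [LinearOrder K] [IsStrictOrderedRing K] (D : K → K) (O : Subring K)
    (hK : IsPreHField D O) (hdivp : DIVPat D 1) (hng : ¬ ∃ s : K, IsGap D O s) :
    {y : K | ∃ f ∈ O, preceq O y (D f)} = {y : K | ∃ g ∈ mIdeal O, D g = y} := by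
  have hconv := hK.convex
  have hD0 : D 0 = 0 := by
    have := hK.map_add 0 0; simp at this; linarith
  have hDneg : ∀ x : K, D (-x) = - D x := by
    intro x
    have := hK.map_add x (-x); simp [hD0] at this; linarith
  ext y
  simp only [Set.mem_setOf_eq]
  constructor
  · rintro ⟨f, hfO, c, hcO, hyc⟩
    by_cases hy0 : y = 0
    · exact ⟨0, ⟨O.zero_mem, Or.inl rfl⟩, by rw [hD0, hy0]⟩
    have hDf0 : D f ≠ 0 := fun h => hy0 (by rw [hyc, h, mul_zero])
    have hf0 : f ≠ 0 := by rintro rfl; exact hDf0 hD0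
    -- gap condition (a) holds for y
    have key : ∀ g0 : K, g0 ≠ 0 → g0 ∈ mIdeal O → precl O y (D g0 / g0) := by
      intro g0 hg0 hg0m
      have hs := hK.small f g0 hf0 hg0 ⟨f, hfO, (mul_one f).symm⟩
        ⟨one_ne_zero, by simpa using hg0m⟩
      refine ⟨hs.1, ?_⟩
      have : y / (D g0 / g0) = c * (D f / (D g0 / g0)) := by rw [hyc]; ring
      rw [this]; exact mIdeal_mul hcO hs.2
    have condA : ∀ g : K, g ≠ 0 → ¬ asymp O g 1 → precl O y (D g / g) := by
      intro g hg hga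
      have hcase : g ∉ O ∨ g⁻¹ ∉ O := by
        by_contra hc
        push_neg at hc
        exact hga ⟨⟨g, hc.1, (mul_one g).symm⟩, ⟨g⁻¹, hc.2, (inv_mul_cancel₀ hg).symm⟩⟩
      rcases hcase with hgn | hgin
      · -- g ∉ O, so g⁻¹ ∈ 𝔬
        have hgi : g⁻¹ ∈ O := (hK.mem_or_inv_mem g hg).resolve_left hgn
        have hgim : g⁻¹ ∈ mIdeal O := ⟨hgi, Or.inr (by simpa using hgn)⟩
        have hk := key g⁻¹ (inv_ne_zero hg) hgim
        have hDgi : D g⁻¹ / g⁻¹ = -(D g / g) := by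
          have h1 : g * g⁻¹ = 1 := mul_inv_cancel₀ hg
          have h2 := hK.leibniz g g⁻¹
          rw [h1] at h2
          have h3 : D 1 = 0 := by
            have := hK.leibniz 1 1; simp at this; linarith
          rw [h3] at h2
          have hgi0 : g⁻¹ ≠ 0 := inv_ne_zero hg
          field_simp
          field_simp at h2
          linarith
        rw [hDgi] at hk
        obtain ⟨hk1, hk2⟩ := hk
        refine ⟨fun hc => hk1 (by rw [hc]; ring), ?_⟩
        have : y / (D g / g) = -(y / -(D g / g)) := by ring
        rw [this]
        exact mIdeal_neg hk2
      · have hgO : g ∈ O := by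
          rcases hK.mem_or_inv_mem g hg with h | h
          · exact h
          · exact absurd h hgin
        exact key g hg ⟨hgO, Or.inr hgin⟩
    -- y is not a gap, so condition (b) fails
    obtain ⟨h, hh0, hh1, hhnp⟩ : ∃ h : K, h ≠ 0 ∧ precl O h 1 ∧ ¬ precl O (D h) y := by
      by_contra hc
      push_neg at hc
      exact hng ⟨y, hy0, condA, hc⟩
    have hmem : D h / y ∉ mIdeal O := fun hm => hhnp ⟨hy0, hm⟩
    have hDh0 : D h ≠ 0 := by
      rintro h'
      exact hmem (by rw [h', zero_div]; exact ⟨O.zero_mem, Or.inl rfl⟩)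
    have hyDh : y / D h ∈ O := by
      have hd0 : D h / y ≠ 0 := div_ne_zero hDh0 hy0
      have : (D h / y)⁻¹ ∈ O := by
        rcases hK.mem_or_inv_mem _ hd0 with h1 | h1
        · by_contra hc; exact hmem ⟨h1, Or.inr hc⟩
        · exact h1
      rwa [inv_div] at this
    -- get a positive small element p with y ≼ D p
    obtain ⟨p, hppos, hpm, hDp0, hyDp⟩ :
        ∃ p : K, 0 < p ∧ p ∈ mIdeal O ∧ D p ≠ 0 ∧ y / D p ∈ O := by
      have hhm : h ∈ mIdeal O := by simpa using hh1.2
      rcases lt_or_gt_of_ne hh0 with hneg | hpos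
      · refine ⟨-h, by linarith, mIdeal_neg hhm, by rw [hDneg]; simpa using hDh0, ?_⟩
        rw [hDneg, div_neg]
        exact O.neg_mem hyDh
      · exact ⟨h, hpos, hhm, hDh0, hyDh⟩
    have hp0 : p ≠ 0 := ne_of_gt hppos
    have hplt1 : p < 1 := mIdeal_lt_one hconv hpm
    -- square root of p via DIVP
    obtain ⟨z, hz0, hz1, hzz⟩ := hdivp
      (MvPolynomial.X 0 * MvPolynomial.X 0 - MvPolynomial.C p) 0 1 one_pos
      (by simp; exact hppos)
      (by simp; nlinarith [hD0])
    simp at hzz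
    have hz2 : z * z = p := by
      have : D^[(((0:Fin 2)):ℕ)] z = z := by simp
      nlinarith [hzz]
    have hzne : z ≠ 0 := ne_of_gt hz0
    have hzm : z ∈ mIdeal O := by
      refine ⟨hconv z 1 (le_of_lt hz0) (le_of_lt hz1) O.one_mem, Or.inr ?_⟩
      intro hc
      have hpinv : p⁻¹ ∈ O := by
        have : p⁻¹ = z⁻¹ * z⁻¹ := by rw [← hz2]; rw [mul_inv]
        rw [this]; exact O.mul_mem hc hc
      rcases hpm.2 with h' | h'
      · exact hp0 h'
      · exact h' hpinv
    have hDp : D p = 2 * (z * D z) := by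
      have := hK.leibniz z z
      rw [hz2] at this
      linarith
    have hDz0 : D z ≠ 0 := by
      rintro h'
      rw [h'] at hDp
      simp at hDp
      exact hDp0 hDp
    have hyz : y / D z ∈ mIdeal O := by
      have heq : y / D z = (2 * (y / D p)) * z := by
        rw [hDp]
        field_simp
      rw [heq]
      exact mIdeal_mul (O.mul_mem (by rw [(by norm_num : (2:K) = 1 + 1)]; exact O.add_mem O.one_mem O.one_mem : (2:K) ∈ O) hyDp) hzm
    have habs : |y| < |D z| := by
      have h1 := mIdeal_abs_lt_one hconv hyz
      rwa [abs_div, div_lt_one (abs_pos.mpr hDz0)] at h1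
    have hDnz : D (-z) = - D z := hDneg z
    -- final application of DIVP to find w ∈ 𝔬 with D w = y
    rcases lt_or_gt_of_ne hDz0 with hDzneg | hDzpos
    · -- D z < 0 : use C y - X 1
      have hzabs : |D z| = - D z := abs_of_neg hDzneg
      obtain ⟨w, hw1, hw2, hw3⟩ := hdivp
        (MvPolynomial.C y - MvPolynomial.X 1) (-z) z (by linarith)
        (by
          simp [hDnz]
          have := abs_lt.mp habs
          rw [hzabs] at this
          linarith [this.2])
        (by
          simp
          have := abs_lt.mp habs
          rw [hzabs] at this
          linarith [this.1])
      simp at hw3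
      refine ⟨w, mIdeal_of_abs_le hconv (abs_le.mpr ⟨le_of_lt hw1, le_of_lt hw2⟩) hzm, ?_⟩
      linarith
    · -- D z > 0 : use X 1 - C y
      have hzabs : |D z| = D z := abs_of_pos hDzpos
      obtain ⟨w, hw1, hw2, hw3⟩ := hdivp
        (MvPolynomial.X 1 - MvPolynomial.C y) (-z) z (by linarith)
        (by
          simp [hDnz]
          have := abs_lt.mp habs
          rw [hzabs] at this
          linarith [this.1])
        (by
          simp
          have := abs_lt.mp habs
          rw [hzabs] at this
          linarith [this.2])
      simp at hw3
      refine ⟨w, mIdeal_of_abs_le hconv (abs_le.mpr ⟨le_of_lt hw1, le_of_lt hw2⟩) hzm, ?_⟩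
      linarith
  · rintro ⟨g, hg, rfl⟩
    exact ⟨g, hg.1, 1, O.one_mem, (one_mul _).symm⟩
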